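/- Let g, N ∈ ℕ with gcd(g, N) = 1, g/N = [a_0; a_1, …, a_ℓ] with a_ℓ = 1, and K = max(a_1, …, a_ℓ). Let P = P((1,g), N) = { ({k/N}, {kg/N}) : k = 0, 1, …, N−1 } be the rank-1 lattice point set. Then the mesh ratio of P satisfies ρ_∞(P) ≤ 4(K+2). -/

import Mathlib

/-- The value of a finite continued fraction `[a₀; a₁, …, a_ℓ]` given as a list of
partial quotients. -/
noncomputable def cfVal : List ℕ → ℝ
  | [] => 0
  | [a] => (a : ℝ)
  | a :: rest => (a : ℝ) + 1 / cfVal rest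

/-- The rank-1 lattice point set `P((1,g), N) = { ({k/N}, {kg/N}) : k = 0, …, N−1 }`. -/
def rank1LattPts (g N : ℕ) : Set (Fin 2 → ℝ) :=
  {x | ∃ k : ℕ, k < N ∧ x = ![Int.fract ((k : ℝ) / N), Int.fract ((k : ℝ) * g / N)]}

/-- Covering radius in the `ℓ_∞` norm of a point set `P` with respect to a domain `Ω`. -/
noncomputable def covRadInf (P Ω : Set (Fin 2 → ℝ)) : ℝ :=
  ⨆ x : Ω, ⨅ y : P, dist (x : Fin 2 → ℝ) (y : Fin 2 → ℝ)

/-- Separation radius in the `ℓ_∞` norm of a point set `P`. -/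
noncomputable def sepRadInf (P : Set (Fin 2 → ℝ)) : ℝ :=
  sInf {r : ℝ | ∃ x ∈ P, ∃ y ∈ P, x ≠ y ∧ r = dist x y} / 2

set_option maxHeartbeats 1000000

namespace MeshAux

lemma cfVal_cons (a : ℕ) (l : List ℕ) : cfVal (a :: l) = a + 1 / cfVal l := by
  cases l with
  | nil => simp [cfVal]
  | cons b t => rfl

lemma cfVal_nonneg (l : List ℕ) : 0 ≤ cfVal l := by
  induction l with
  | nil => simp [cfVal]
  | cons a t ih =>
      rw [cfVal_cons]
      exact add_nonneg (Nat.cast_nonneg a) (one_div_nonneg.mpr ih)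

lemma cfVal_one_le (l : List ℕ) (hne : l ≠ []) (hpos : ∀ a ∈ l, 1 ≤ a) : 1 ≤ cfVal l := by
  cases l with
  | nil => exact absurd rfl hne
  | cons a t =>
      rw [cfVal_cons]
      have h1 : (1 : ℝ) ≤ (a : ℝ) := by
        exact_mod_cast hpos a List.mem_cons_self
      have h2 : 0 ≤ 1 / cfVal t := one_div_nonneg.mpr (cfVal_nonneg t)
      linarith

/-- partial quotients, shifted: `A as i = a_{i+1}` classically. -/
def A (as : List ℕ) (i : ℕ) : ℕ := as.getD i 1

lemma one_le_A (as : List ℕ) (hpos : ∀ a ∈ as, 1 ≤ a) (i : ℕ) : 1 ≤ A as i := by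
  unfold A
  by_cases h : i < as.length
  · rw [as.getD_eq_getElem 1 h]
    exact hpos _ (as.getElem_mem h)
  · rw [as.getD_eq_default 1 (le_of_not_gt h)]

def qs (as : List ℕ) : ℕ → ℤ
  | 0 => 0
  | 1 => 1
  | (i+2) => A as i * qs as (i+1) + qs as i

def ps (a₀ : ℕ) (as : List ℕ) : ℕ → ℤ
  | 0 => 1
  | 1 => (a₀ : ℤ)
  | (i+2) => A as i * ps a₀ as (i+1) + ps a₀ as i

def es (g N a₀ : ℕ) (as : List ℕ) (i : ℕ) : ℤ := qs as i * g - ps a₀ as i * N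

lemma es_zero (g N a₀ : ℕ) (as : List ℕ) : es g N a₀ as 0 = -(N : ℤ) := by
  simp [es, qs, ps]

lemma es_one (g N a₀ : ℕ) (as : List ℕ) : es g N a₀ as 1 = (g : ℤ) - a₀ * N := by
  simp [es, qs, ps]

lemma es_rec (g N a₀ : ℕ) (as : List ℕ) (i : ℕ) :
    es g N a₀ as (i+2) = A as i * es g N a₀ as (i+1) + es g N a₀ as i := by
  simp [es, qs, ps]; ring

lemma qs_nonneg (as : List ℕ) : ∀ i, 0 ≤ qs as i
  | 0 => by simp [qs]
  | 1 => by simp [qs]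
  | (i+2) => by
      have h1 := qs_nonneg as (i+1)
      have h2 := qs_nonneg as i
      rw [qs]
      have : (0:ℤ) ≤ A as i := Int.ofNat_nonneg _
      nlinarith

lemma qs_le_succ (as : List ℕ) (hpos : ∀ a ∈ as, 1 ≤ a) : ∀ i, qs as i ≤ qs as (i+1)
  | 0 => by simp [qs]
  | (i+1) => by
      have h1 := qs_nonneg as i
      have h2 := qs_nonneg as (i+1)
      have h3 : (1:ℤ) ≤ A as i := by exact_mod_cast one_le_A as hpos i
      show qs as (i+1) ≤ qs as (i+2)
      rw [qs]
      nlinarith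

lemma qs_mono (as : List ℕ) (hpos : ∀ a ∈ as, 1 ≤ a) : Monotone (qs as) :=
  monotone_nat_of_le_succ (qs_le_succ as hpos)

lemma one_le_qs (as : List ℕ) (hpos : ∀ a ∈ as, 1 ≤ a) (i : ℕ) (hi : 1 ≤ i) :
    1 ≤ qs as i := by
  have := qs_mono as hpos hi
  simpa [qs] using this

def Dd (a₀ : ℕ) (as : List ℕ) (i : ℕ) : ℤ :=
  qs as i * ps a₀ as (i+1) - qs as (i+1) * ps a₀ as i

lemma Dd_succ (a₀ : ℕ) (as : List ℕ) (i : ℕ) : Dd a₀ as (i+1) = - Dd a₀ as i := by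
  simp [Dd, qs, ps]; ring

lemma Dd_mul_self (a₀ : ℕ) (as : List ℕ) : ∀ i, Dd a₀ as i * Dd a₀ as i = 1
  | 0 => by simp [Dd, qs, ps]
  | (i+1) => by rw [Dd_succ]; simpa using Dd_mul_self a₀ as i

lemma W_eq (g N a₀ : ℕ) (as : List ℕ) (i : ℕ) :
    qs as i * es g N a₀ as (i+1) - qs as (i+1) * es g N a₀ as i
      = -(N : ℤ) * Dd a₀ as i := by
  simp [es, Dd]; ring

end MeshAux

section
namespace MeshAux
variable (g N a₀ : ℕ) (as : List ℕ)

lemma tail_eq (hN : 0 < N) (hpos : ∀ a ∈ as, 1 ≤ a)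
    (hcf : (g : ℝ) / N = cfVal (a₀ :: as)) :
    ∀ i, i < as.length →
      (es g N a₀ as i : ℝ) = -(cfVal (as.drop i)) * (es g N a₀ as (i+1) : ℝ) := by
  have hN0 : (0:ℝ) < N := by exact_mod_cast hN
  intro i
  induction i with
  | zero =>
      intro h0
      have hne : as ≠ [] := List.ne_nil_of_length_pos h0
      have hT : 1 ≤ cfVal as := cfVal_one_le as hne hpos
      have hT0 : cfVal as ≠ 0 := by linarith
      have h1 : (g:ℝ)/N = a₀ + 1 / cfVal as := by rw [hcf, cfVal_cons]
      have h2 : (g:ℝ) = ((a₀:ℝ) + 1 / cfVal as) * N := (div_eq_iff hN0.ne').mp h1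
      rw [List.drop_zero]
      rw [show es g N a₀ as 0 = -(N:ℤ) from es_zero g N a₀ as,
        show es g N a₀ as 1 = (g : ℤ) - a₀ * N from es_one g N a₀ as]
      push_cast
      rw [h2]
      field_simp
      ring
  | succ i ih =>
      intro hi1
      have hi : i < as.length := Nat.lt_of_succ_lt hi1
      have ih' := ih hi
      have hdrop : as.drop i = as[i] :: as.drop (i+1) := List.drop_eq_getElem_cons hi
      have hA : (A as i : ℤ) = (as[i] : ℤ) := by
        unfold A; rw [as.getD_eq_getElem 1 hi]
      have hne' : as.drop (i+1) ≠ [] := by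
        apply List.ne_nil_of_length_pos
        rw [List.length_drop]; omega
      have hT' : 1 ≤ cfVal (as.drop (i+1)) :=
        cfVal_one_le _ hne' (fun a ha => hpos a (List.drop_subset _ _ ha))
      have hT0' : cfVal (as.drop (i+1)) ≠ 0 := by linarith
      have hTi : cfVal (as.drop i) = (as[i] : ℝ) + 1 / cfVal (as.drop (i+1)) := by
        rw [hdrop, cfVal_cons]
      have hrec : ((es g N a₀ as (i+2) : ℤ) : ℝ)
          = (A as i : ℝ) * (es g N a₀ as (i+1) : ℝ) + (es g N a₀ as i : ℝ) := by
        rw [es_rec g N a₀ as i]; push_cast; ring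
      rw [hTi] at ih'
      have hAr : ((A as i : ℕ) : ℝ) = (as[i] : ℝ) := by exact_mod_cast hA
      rw [hAr] at hrec
      show ((es g N a₀ as (i+1) : ℤ) : ℝ)
        = -cfVal (List.drop (i+1) as) * ((es g N a₀ as (i+2) : ℤ) : ℝ)
      rw [hrec, ih']
      field_simp
      ring

lemma es_top (hN : 0 < N) (hpos : ∀ a ∈ as, 1 ≤ a) (has : as ≠ [])
    (hlast : as.getLast? = some 1) (hcf : (g : ℝ) / N = cfVal (a₀ :: as)) :
    es g N a₀ as (as.length + 1) = 0 := by
  obtain ⟨m, hm⟩ : ∃ m, as.length = m + 1 :=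
    ⟨as.length - 1, by have := List.length_pos_iff.mpr has; omega⟩
  have hmlt : m < as.length := by omega
  have hdrop : as.drop m = [as[m]] := by
    rw [List.drop_eq_getElem_cons hmlt]
    congr 1
    rw [show m + 1 = as.length from hm.symm, List.drop_length]
  have hlast1 : as[m] = 1 := by
    rw [List.getLast?_eq_getElem?] at hlast
    rw [hm] at hlast
    simp only [Nat.add_sub_cancel] at hlast
    rw [List.getElem?_eq_getElem hmlt] at hlast
    exact Option.some_injective _ hlast
  have hA : A as m = 1 := by
    unfold A; rw [as.getD_eq_getElem 1 hmlt, hlast1]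
  have ht := tail_eq g N a₀ as hN hpos hcf m hmlt
  rw [hdrop, hlast1] at ht
  have hcf1 : cfVal [1] = 1 := by simp [cfVal]
  rw [hcf1] at ht
  have hrec : ((es g N a₀ as (m+2) : ℤ) : ℝ)
      = (A as m : ℝ) * (es g N a₀ as (m+1) : ℝ) + (es g N a₀ as m : ℝ) := by
    rw [es_rec g N a₀ as m]; push_cast; ring
  rw [hA, ht] at hrec
  have : ((es g N a₀ as (m+2) : ℤ) : ℝ) = 0 := by rw [hrec]; push_cast; ring
  have h0 : es g N a₀ as (m+2) = 0 := by exact_mod_cast this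
  rw [hm]
  exact h0

lemma es_pair (hN : 0 < N) (hpos : ∀ a ∈ as, 1 ≤ a) (has : as ≠ [])
    (hlast : as.getLast? = some 1) (hcf : (g : ℝ) / N = cfVal (a₀ :: as))
    (i : ℕ) (hi : i ≤ as.length) :
    es g N a₀ as i * es g N a₀ as (i+1) ≤ 0 ∧
      |es g N a₀ as (i+1)| ≤ |es g N a₀ as i| := by
  rcases lt_or_eq_of_le hi with hlt | heq
  · have ht := tail_eq g N a₀ as hN hpos hcf i hlt
    have hne : as.drop i ≠ [] := by
      apply List.ne_nil_of_length_pos; rw [List.length_drop]; omega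
    have hT : 1 ≤ cfVal (as.drop i) :=
      cfVal_one_le _ hne (fun a ha => hpos a (List.drop_subset _ _ ha))
    constructor
    · have hr : ((es g N a₀ as i * es g N a₀ as (i+1) : ℤ) : ℝ) ≤ 0 := by
        push_cast
        rw [ht]
        nlinarith [sq_nonneg ((es g N a₀ as (i+1) : ℤ) : ℝ)]
      exact_mod_cast hr
    · have hr : ((|es g N a₀ as (i+1)| : ℤ) : ℝ) ≤ ((|es g N a₀ as i| : ℤ) : ℝ) := by
        push_cast
        rw [ht, abs_mul, abs_neg, abs_of_nonneg (by linarith : (0:ℝ) ≤ cfVal (as.drop i))]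
        nlinarith [abs_nonneg ((es g N a₀ as (i+1) : ℤ) : ℝ)]
      exact_mod_cast hr
  · subst heq
    rw [es_top g N a₀ as hN hpos has hlast hcf]
    simp

lemma qs_top (hN : 0 < N) (hgcd : Nat.Coprime g N) (hpos : ∀ a ∈ as, 1 ≤ a)
    (has : as ≠ []) (hlast : as.getLast? = some 1)
    (hcf : (g : ℝ) / N = cfVal (a₀ :: as)) :
    qs as (as.length + 1) = (N : ℤ) := by
  set L := as.length with hL
  have htop : es g N a₀ as (L+1) = 0 := es_top g N a₀ as hN hpos has hlast hcf
  have h1 : qs as (L+1) * g = ps a₀ as (L+1) * N := by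
    have := htop; unfold es at this; linarith
  have hdvd1 : (N:ℤ) ∣ qs as (L+1) := by
    have hco : IsCoprime (N:ℤ) (g:ℤ) := (Nat.isCoprime_iff_coprime.mpr hgcd).symm
    exact hco.dvd_of_dvd_mul_right ⟨ps a₀ as (L+1), by linarith⟩
  have hW := W_eq g N a₀ as L
  rw [htop] at hW
  have hd := Dd_mul_self a₀ as L
  have hdvd2 : qs as (L+1) ∣ (N:ℤ) := by
    refine ⟨es g N a₀ as L * Dd a₀ as L, ?_⟩
    linear_combination Dd a₀ as L * hW - (N:ℤ) * hd
  exact Int.dvd_antisymm (qs_nonneg as (L+1)) (by positivity) hdvd2 hdvd1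

lemma rep_lemma (Q Q' Pp Pp' q p : ℤ)
    (hd : (Q * Pp' - Q' * Pp) * (Q * Pp' - Q' * Pp) = 1) :
    ∃ s t : ℤ, s * Q + t * Q' = q ∧ s * Pp + t * Pp' = p := by
  refine ⟨(q * Pp' - p * Q') * (Q * Pp' - Q' * Pp),
    (p * Q - q * Pp) * (Q * Pp' - Q' * Pp), ?_, ?_⟩
  · linear_combination q * hd
  · linear_combination p * hd

lemma abs_le_abs_add' (a b : ℤ) (h : 0 ≤ a * b) : |a| ≤ |a + b| := by
  rcases le_or_gt 0 a with ha | ha <;> rcases le_or_gt 0 b with hb | hb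
  · rw [abs_of_nonneg ha, abs_of_nonneg (by linarith)]; linarith
  · have h0 : a = 0 := le_antisymm (by nlinarith) ha
    simp [h0]
  · have h0 : b = 0 := le_antisymm (by nlinarith) (by nlinarith)
    simp [h0]
  · rw [abs_of_neg ha, abs_of_neg (by linarith)]; linarith

lemma best_approx (hpos : ∀ a ∈ as, 1 ≤ a) (i : ℕ) (hi1 : 1 ≤ i)
    (hsign : es g N a₀ as i * es g N a₀ as (i+1) ≤ 0)
    (q p : ℤ) (hq : 1 ≤ q) (hlt : q < qs as (i+1)) :
    |es g N a₀ as i| ≤ |q * g - p * N| := by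
  have hQ0 : 0 ≤ qs as i := qs_nonneg as i
  have hQ'1 : 1 ≤ qs as (i+1) := one_le_qs as hpos (i+1) (by omega)
  have hd : (qs as i * ps a₀ as (i+1) - qs as (i+1) * ps a₀ as i) *
      (qs as i * ps a₀ as (i+1) - qs as (i+1) * ps a₀ as i) = 1 := by
    have := Dd_mul_self a₀ as i
    unfold Dd at this
    exact this
  obtain ⟨s, t, h1, h2⟩ := rep_lemma (qs as i) (qs as (i+1)) (ps a₀ as i)
    (ps a₀ as (i+1)) q p hd
  have he : q * (g:ℤ) - p * N = s * es g N a₀ as i + t * es g N a₀ as (i+1) := by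
    unfold es
    linear_combination (-(g:ℤ)) * h1 + (N:ℤ) * h2
  rw [he]
  by_cases ht0 : t = 0
  · have hs0 : s ≠ 0 := by
      rintro rfl; rw [ht0] at h1; simp at h1; omega
    rw [ht0]
    have habs : 1 ≤ |s| := Int.one_le_abs hs0
    rw [zero_mul, add_zero, abs_mul]
    nlinarith [abs_nonneg (es g N a₀ as i)]
  · by_cases hs0 : s = 0
    · exfalso
      rw [hs0, zero_mul, zero_add] at h1
      rcases lt_or_gt_of_ne ht0 with h | h
      · nlinarith
      · nlinarith
    · by_cases hst : 0 < s * t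
      · exfalso
        rcases mul_pos_iff.mp hst with ⟨hs, ht⟩ | ⟨hs, ht⟩
        · nlinarith
        · nlinarith
      · push_neg at hst
        have hab : 0 ≤ (s * es g N a₀ as i) * (t * es g N a₀ as (i+1)) := by
          have : (s * es g N a₀ as i) * (t * es g N a₀ as (i+1))
              = (s * t) * (es g N a₀ as i * es g N a₀ as (i+1)) := by ring
          rw [this]
          nlinarith [hst, hsign]
        calc |es g N a₀ as i| ≤ |s| * |es g N a₀ as i| := by
              nlinarith [Int.one_le_abs hs0, abs_nonneg (es g N a₀ as i)]
          _ = |s * es g N a₀ as i| := (abs_mul _ _).symm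
          _ ≤ |s * es g N a₀ as i + t * es g N a₀ as (i+1)| := abs_le_abs_add' _ _ hab

lemma loc (hpos : ∀ a ∈ as, 1 ≤ a) :
    ∀ n, ∀ q : ℤ, 1 ≤ q → q < qs as n →
      ∃ i, 1 ≤ i ∧ i + 1 ≤ n ∧ qs as i ≤ q ∧ q < qs as (i+1) := by
  intro n
  induction n with
  | zero => intro q hq hlt; simp [qs] at hlt; omega
  | succ n ih =>
      intro q hq hlt
      by_cases hn0 : n = 0
      · subst hn0; simp [qs] at hlt; omega
      by_cases hle : qs as n ≤ q
      · exact ⟨n, by omega, by omega, hle, hlt⟩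
      · obtain ⟨i, ha, hb, hc, hd⟩ := ih q hq (lt_of_not_ge hle)
        exact ⟨i, ha, by omega, hc, hd⟩

end MeshAux
end

section
namespace MeshAux
variable (g N a₀ : ℕ) (as : List ℕ)

lemma cover (hN : 0 < N) (i : ℕ) (x1 x2 : ℝ) :
    ∃ c₁ c₂ m : ℤ, c₁ * (g:ℤ) - c₂ = m * N ∧
      |(N:ℝ) * x1 - c₁| ≤ (((qs as i : ℤ) : ℝ) + ((qs as (i+1) : ℤ) : ℝ)) / 2 ∧
      |(N:ℝ) * x2 - c₂| ≤ (((|es g N a₀ as i| : ℤ) : ℝ) + ((|es g N a₀ as (i+1)| : ℤ) : ℝ)) / 2 := by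
  have hWD : (qs as i * es g N a₀ as (i+1) - qs as (i+1) * es g N a₀ as i) * Dd a₀ as i
      = -(N:ℤ) := by
    have hw := W_eq g N a₀ as i
    have hd := Dd_mul_self a₀ as i
    linear_combination Dd a₀ as i * hw - (N:ℤ) * hd
  set W0 : ℤ := qs as i * es g N a₀ as (i+1) - qs as (i+1) * es g N a₀ as i with hW0def
  have hW0 : W0 ≠ 0 := by
    intro h
    rw [h, zero_mul] at hWD
    have : (N:ℤ) = 0 := by linarith
    omega
  set Q : ℝ := ((qs as i : ℤ) : ℝ) with hQdef
  set Q' : ℝ := ((qs as (i+1) : ℤ) : ℝ) with hQ'def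
  set E : ℝ := ((es g N a₀ as i : ℤ) : ℝ) with hEdef
  set E' : ℝ := ((es g N a₀ as (i+1) : ℤ) : ℝ) with hE'def
  have hw : Q * E' - Q' * E ≠ 0 := by
    have : Q * E' - Q' * E = ((W0 : ℤ) : ℝ) := by rw [hW0def]; push_cast; ring
    rw [this]
    exact_mod_cast hW0
  set σ : ℝ := ((N * x1) * E' - (N * x2) * Q') / (Q * E' - Q' * E) with hσdef
  set τ : ℝ := (Q * (N * x2) - E * (N * x1)) / (Q * E' - Q' * E) with hτdef
  have hx1 : (N:ℝ) * x1 = σ * Q + τ * Q' := by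
    rw [hσdef, hτdef, div_mul_eq_mul_div, div_mul_eq_mul_div, ← add_div, eq_div_iff hw]; ring
  have hx2 : (N:ℝ) * x2 = σ * E + τ * E' := by
    rw [hσdef, hτdef, div_mul_eq_mul_div, div_mul_eq_mul_div, ← add_div, eq_div_iff hw]; ring
  refine ⟨round σ * qs as i + round τ * qs as (i+1),
    round σ * es g N a₀ as i + round τ * es g N a₀ as (i+1),
    round σ * ps a₀ as i + round τ * ps a₀ as (i+1), ?_, ?_, ?_⟩
  · unfold es; ring
  · have h1 : (N:ℝ) * x1 - (round σ * qs as i + round τ * qs as (i+1) : ℤ)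
        = (σ - round σ) * Q + (τ - round τ) * Q' := by
      push_cast
      rw [hQdef, hQ'def] at hx1
      push_cast at hx1
      linarith [hx1]
    rw [h1]
    have hQ0 : 0 ≤ Q := by rw [hQdef]; exact_mod_cast qs_nonneg as i
    have hQ'0 : 0 ≤ Q' := by rw [hQ'def]; exact_mod_cast qs_nonneg as (i+1)
    calc |(σ - round σ) * Q + (τ - round τ) * Q'|
        ≤ |(σ - round σ) * Q| + |(τ - round τ) * Q'| := abs_add_le _ _
      _ = |σ - round σ| * Q + |τ - round τ| * Q' := by
          rw [abs_mul, abs_mul, abs_of_nonneg hQ0, abs_of_nonneg hQ'0]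
      _ ≤ (1/2) * Q + (1/2) * Q' := by
          have := abs_sub_round σ
          have := abs_sub_round τ
          have h2 : |σ - round σ| * Q ≤ (1/2) * Q := by nlinarith
          have h3 : |τ - round τ| * Q' ≤ (1/2) * Q' := by nlinarith
          linarith
      _ = (Q + Q') / 2 := by ring
  · have h1 : (N:ℝ) * x2 - (round σ * es g N a₀ as i + round τ * es g N a₀ as (i+1) : ℤ)
        = (σ - round σ) * E + (τ - round τ) * E' := by
      push_cast
      rw [hEdef, hE'def] at hx2
      push_cast at hx2
      linarith [hx2]
    rw [h1]
    calc |(σ - round σ) * E + (τ - round τ) * E'|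
        ≤ |(σ - round σ) * E| + |(τ - round τ) * E'| := abs_add_le _ _
      _ = |σ - round σ| * |E| + |τ - round τ| * |E'| := by rw [abs_mul, abs_mul]
      _ ≤ (1/2) * |E| + (1/2) * |E'| := by
          have := abs_sub_round σ
          have := abs_sub_round τ
          have h2 : |σ - round σ| * |E| ≤ (1/2) * |E| := by nlinarith [abs_nonneg E]
          have h3 : |τ - round τ| * |E'| ≤ (1/2) * |E'| := by nlinarith [abs_nonneg E']
          linarith
      _ = (((|es g N a₀ as i| : ℤ) : ℝ) + ((|es g N a₀ as (i+1)| : ℤ) : ℝ)) / 2 := by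
          rw [hEdef, hE'def]; push_cast; ring

lemma le_foldr_max (l : List ℕ) (a : ℕ) (ha : a ∈ l) : a ≤ l.foldr max 0 := by
  induction l with
  | nil => cases ha
  | cons b t ih =>
      rcases List.mem_cons.mp ha with rfl | h
      · exact le_max_left _ _
      · exact le_trans (ih h) (le_max_right _ _)

end MeshAux
end

section
namespace MeshAux
variable (g N a₀ : ℕ) (as : List ℕ)

lemma fract_nat_div (k : ℕ) (hN : 0 < N) (hk : k < N) :
    Int.fract ((k : ℝ) / N) = (k : ℝ) / N := by
  have hN0 : (0:ℝ) < N := by exact_mod_cast hN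
  rw [Int.fract_eq_self]
  constructor
  · positivity
  · rw [div_lt_one hN0]; exact_mod_cast hk

lemma sep_lower (hN : 0 < N) (hgcd : Nat.Coprime g N) (hpos : ∀ a ∈ as, 1 ≤ a)
    (has : as ≠ []) (hlast : as.getLast? = some 1)
    (hcf : (g : ℝ) / N = cfVal (a₀ :: as))
    (μZ : ℤ) (hμmin : ∀ i ∈ Finset.Icc 1 as.length, μZ ≤ max (qs as i) |es g N a₀ as i|)
    (k k' : ℕ) (hk : k < N) (hk' : k' < N) (hne : k ≠ k') :
    (μZ : ℝ) ≤ (N:ℝ) * dist (![Int.fract ((k : ℝ) / N), Int.fract ((k : ℝ) * g / N)])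
      (![Int.fract ((k' : ℝ) / N), Int.fract ((k' : ℝ) * g / N)]) := by
  have hN0 : (0:ℝ) < N := by exact_mod_cast hN
  set x : Fin 2 → ℝ := ![Int.fract ((k : ℝ) / N), Int.fract ((k : ℝ) * g / N)] with hx
  set y : Fin 2 → ℝ := ![Int.fract ((k' : ℝ) / N), Int.fract ((k' : ℝ) * g / N)] with hy
  set d : ℝ := dist x y with hd
  have h0 : |(k:ℝ)/N - (k':ℝ)/N| ≤ d := by
    have h := dist_le_pi_dist x y 0
    rw [Real.dist_eq] at h
    have hx0 : x 0 = (k:ℝ)/N := by rw [hx]; simp [fract_nat_div N k hN hk]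
    have hy0 : y 0 = (k':ℝ)/N := by rw [hy]; simp [fract_nat_div N k' hN hk']
    rw [hx0, hy0] at h
    exact h
  set m : ℤ := ⌊(k:ℝ) * g / N⌋ - ⌊(k':ℝ) * g / N⌋ with hm
  have h1 : |((k:ℝ) - k') * g / N - m| ≤ d := by
    have h := dist_le_pi_dist x y 1
    rw [Real.dist_eq] at h
    have hxy1 : x 1 - y 1 = ((k:ℝ) - k') * g / N - m := by
      simp only [hx, hy, Matrix.cons_val_one, Matrix.head_cons]
      rw [← Int.self_sub_floor, ← Int.self_sub_floor, hm]
      push_cast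
      ring
    rwa [hxy1] at h
  set qz : ℤ := |(k:ℤ) - k'| with hqz
  have hqz1 : 1 ≤ qz := by
    rw [hqz]
    refine Int.one_le_abs ?_
    intro h; apply hne; omega
  have hqzN : qz < qs as (as.length + 1) := by
    rw [qs_top g N a₀ as hN hgcd hpos has hlast hcf, hqz]
    exact abs_lt.mpr ⟨by omega, by omega⟩
  obtain ⟨i, hi1, hi2, hi3, hi4⟩ := loc as hpos (as.length + 1) qz hqz1 hqzN
  have hiL : i ≤ as.length := by omega
  have hsign := (es_pair g N a₀ as hN hpos has hlast hcf i hiL).1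
  obtain ⟨q, p, hq1, hqeq, hqcast⟩ : ∃ q p : ℤ, 1 ≤ q ∧ q = qz ∧
      ((|q * (g:ℤ) - p * N| : ℤ) : ℝ) = |((k:ℝ) - k') * g - m * N| := by
    rcases lt_or_gt_of_ne (fun h : (k:ℤ) = k' => hne (by omega)) with hlt | hlt
    · refine ⟨(k':ℤ) - k, -m, by omega, by rw [hqz]; rw [abs_sub_comm]; rw [abs_of_nonneg (by omega)], ?_⟩
      push_cast
      rw [show ((k':ℝ) - k) * g - -(m:ℝ) * N = -(((k:ℝ) - k') * g - m * N) by ring, abs_neg]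
    · refine ⟨(k:ℤ) - k', m, by omega, by rw [hqz, abs_of_nonneg (by omega)], ?_⟩
      push_cast
      ring_nf
  have hba := best_approx g N a₀ as hpos i hi1 hsign q p hq1 (by rw [hqeq]; exact hi4)
  have hnd1 : ((qs as i : ℤ):ℝ) ≤ N * d := by
    have habs : |(k:ℝ)/N - (k':ℝ)/N| = (qz:ℝ)/N := by
      rw [div_sub_div_same, abs_div, abs_of_pos hN0, hqz]
      push_cast
      ring_nf
    have h2 : (qz:ℝ)/N ≤ d := by rw [← habs]; exact h0
    have h3 : ((qs as i : ℤ):ℝ) ≤ (qz:ℝ) := by exact_mod_cast hi3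
    calc ((qs as i : ℤ):ℝ) ≤ (qz:ℝ) := h3
      _ ≤ N * d := by
          rw [div_le_iff₀ hN0] at h2
          linarith [h2]
  have hnd2 : ((|es g N a₀ as i| : ℤ):ℝ) ≤ N * d := by
    have h2 : |((k:ℝ) - k') * g - m * N| ≤ N * d := by
      have h3 : |((k:ℝ) - k') * g / N - m| * N ≤ d * N :=
        mul_le_mul_of_nonneg_right h1 (le_of_lt hN0)
      have h4 : |((k:ℝ) - k') * g / N - m| * N = |((k:ℝ) - k') * g - m * N| := by
        rw [← abs_of_pos hN0, ← abs_mul]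
        congr 1
        rw [abs_of_pos hN0, sub_mul, div_mul_cancel₀ _ hN0.ne']
      linarith [h3, h4.symm.trans_le (le_of_eq rfl)]
    calc ((|es g N a₀ as i| : ℤ):ℝ) ≤ ((|q * (g:ℤ) - p * N| : ℤ) : ℝ) := by exact_mod_cast hba
      _ = |((k:ℝ) - k') * g - m * N| := hqcast
      _ ≤ N * d := h2
  have hmem : i ∈ Finset.Icc 1 as.length := Finset.mem_Icc.mpr ⟨hi1, hiL⟩
  have hμ := hμmin i hmem
  have hμr : (μZ : ℝ) ≤ max ((qs as i : ℤ):ℝ) ((|es g N a₀ as i| : ℤ):ℝ) := by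
    have : ((max (qs as i) |es g N a₀ as i| : ℤ) : ℝ)
        = max ((qs as i : ℤ):ℝ) ((|es g N a₀ as i| : ℤ):ℝ) := by push_cast; rfl
    rw [← this]
    exact_mod_cast hμ
  exact le_trans hμr (max_le hnd1 hnd2)

end MeshAux
end

section
namespace MeshAux
variable (g N a₀ : ℕ) (as : List ℕ)

lemma covRad_le (P : Set (Fin 2 → ℝ)) (c : ℝ) (hc : 0 ≤ c)
    (h : ∀ x ∈ Set.Icc (0:Fin 2 → ℝ) 1, ∃ z ∈ P, dist x z ≤ c) :
    covRadInf P (Set.Icc 0 1) ≤ c := by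
  unfold covRadInf
  apply Real.iSup_le _ hc
  rintro ⟨x, hx⟩
  obtain ⟨z, hz, hdist⟩ := h x hx
  have hbdd : BddBelow (Set.range fun y : P => dist x (y : Fin 2 → ℝ)) :=
    ⟨0, by rintro r ⟨y, rfl⟩; exact dist_nonneg⟩
  exact ciInf_le_of_le hbdd ⟨z, hz⟩ hdist

lemma cov_point (hN : 0 < N) (hpos : ∀ a ∈ as, 1 ≤ a)
    (has : as ≠ []) (hlast : as.getLast? = some 1)
    (hcf : (g : ℝ) / N = cfVal (a₀ :: as))
    (i₀ : ℕ) (hi₀1 : 1 ≤ i₀) (hi₀L : i₀ ≤ as.length)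
    (Hr : ℝ) (hHrdef : Hr = ((max (qs as (i₀+1)) |es g N a₀ as i₀| : ℤ):ℝ) / N)
    (hH2 : Hr ≤ 1/2)
    (x : Fin 2 → ℝ) (hx : x ∈ Set.Icc (0:Fin 2 → ℝ) 1) :
    ∃ z ∈ rank1LattPts g N, dist x z ≤ 2*Hr + 1/(2*(N:ℝ)) := by
  have hN0 : (0:ℝ) < N := by exact_mod_cast hN
  have hNH : (N:ℝ) * Hr = ((max (qs as (i₀+1)) |es g N a₀ as i₀| : ℤ):ℝ) := by
    rw [hHrdef]; field_simp
  have hQ'le : ((qs as (i₀+1) : ℤ):ℝ) ≤ (N:ℝ) * Hr := by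
    rw [hNH]; exact_mod_cast le_max_left _ _
  have hEle : ((|es g N a₀ as i₀| : ℤ):ℝ) ≤ (N:ℝ) * Hr := by
    rw [hNH]; exact_mod_cast le_max_right _ _
  have hQQ' : ((qs as i₀ : ℤ):ℝ) ≤ ((qs as (i₀+1) : ℤ):ℝ) := by
    exact_mod_cast qs_le_succ as hpos i₀
  have hEE' : ((|es g N a₀ as (i₀+1)| : ℤ):ℝ) ≤ ((|es g N a₀ as i₀| : ℤ):ℝ) := by
    exact_mod_cast (es_pair g N a₀ as hN hpos has hlast hcf i₀ hi₀L).2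
  have hHr0 : 0 ≤ Hr := by
    have h1 : (1:ℝ) ≤ ((qs as (i₀+1) : ℤ):ℝ) := by
      exact_mod_cast one_le_qs as hpos (i₀+1) (by omega)
    nlinarith
  set ε : ℝ := 1/(2*(N:ℝ)) with hε
  have hε0 : 0 < ε := by rw [hε]; positivity
  have hNε : (N:ℝ) * ε = 1/2 := by rw [hε]; field_simp
  set u1 : ℝ := min (max (x 0) Hr) (1 - Hr) - ε with hu1
  set u2 : ℝ := min (max (x 1) Hr) (1 - Hr) - ε with hu2
  obtain ⟨c₁, c₂, m, hcong, hb1, hb2⟩ := cover g N a₀ as hN i₀ u1 u2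
  have hb1' : |(N:ℝ)*u1 - c₁| ≤ (N:ℝ)*Hr := le_trans hb1 (by linarith)
  have hb2' : |(N:ℝ)*u2 - c₂| ≤ (N:ℝ)*Hr := le_trans hb2 (by linarith)
  have hcl : ∀ u : ℝ, 0 ≤ u → u ≤ 1 →
      Hr ≤ min (max u Hr) (1 - Hr) ∧ min (max u Hr) (1 - Hr) ≤ 1 - Hr ∧
        |u - min (max u Hr) (1 - Hr)| ≤ Hr := by
    intro u h0u h1u
    refine ⟨le_min (le_max_right _ _) (by linarith), min_le_right _ _, ?_⟩
    rw [abs_le]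
    constructor
    · have : min (max u Hr) (1 - Hr) ≤ u + Hr :=
        le_trans (min_le_left _ _) (max_le (by linarith) (by linarith))
      linarith
    · have : u - Hr ≤ min (max u Hr) (1 - Hr) :=
        le_min (le_trans (by linarith) (le_max_left u Hr)) (by linarith)
      linarith
  have hx00 : 0 ≤ x 0 := hx.1 0
  have hx01 : x 0 ≤ 1 := hx.2 0
  have hx10 : 0 ≤ x 1 := hx.1 1
  have hx11 : x 1 ≤ 1 := hx.2 1
  obtain ⟨hclA0, hclB0, hclC0⟩ := hcl (x 0) hx00 hx01
  obtain ⟨hclA1, hclB1, hclC1⟩ := hcl (x 1) hx10 hx11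
  -- bounds on u1, u2
  have hu1lb : Hr - ε ≤ u1 := by rw [hu1]; linarith
  have hu1ub : u1 ≤ 1 - Hr - ε := by rw [hu1]; linarith
  have hu2lb : Hr - ε ≤ u2 := by rw [hu2]; linarith
  have hu2ub : u2 ≤ 1 - Hr - ε := by rw [hu2]; linarith
  -- integer bounds on c₁ c₂
  have hrb1 := abs_le.mp hb1'
  have hrb2 := abs_le.mp hb2'
  have hNu1a : (N:ℝ)*(Hr - ε) ≤ (N:ℝ)*u1 := mul_le_mul_of_nonneg_left hu1lb hN0.le
  have hNu1b : (N:ℝ)*u1 ≤ (N:ℝ)*(1 - Hr - ε) := mul_le_mul_of_nonneg_left hu1ub hN0.le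
  have hNu2a : (N:ℝ)*(Hr - ε) ≤ (N:ℝ)*u2 := mul_le_mul_of_nonneg_left hu2lb hN0.le
  have hNu2b : (N:ℝ)*u2 ≤ (N:ℝ)*(1 - Hr - ε) := mul_le_mul_of_nonneg_left hu2ub hN0.le
  have hc1a : (0:ℤ) ≤ c₁ := by
    have h1 : (-1:ℝ) < (c₁:ℝ) := by linarith [hrb1.2, hNu1a, hNε]
    have : (-1:ℤ) < c₁ := by exact_mod_cast h1
    omega
  have hc1b : c₁ ≤ (N:ℤ) - 1 := by
    have h1 : (c₁:ℝ) < (N:ℝ) := by linarith [hrb1.1, hNu1b, hNε]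
    have : c₁ < (N:ℤ) := by exact_mod_cast h1
    omega
  have hc2a : (0:ℤ) ≤ c₂ := by
    have h1 : (-1:ℝ) < (c₂:ℝ) := by linarith [hrb2.2, hNu2a, hNε]
    have : (-1:ℤ) < c₂ := by exact_mod_cast h1
    omega
  have hc2b : c₂ ≤ (N:ℤ) - 1 := by
    have h1 : (c₂:ℝ) < (N:ℝ) := by linarith [hrb2.1, hNu2b, hNε]
    have : c₂ < (N:ℤ) := by exact_mod_cast h1
    omega
  -- the lattice point
  set k : ℕ := c₁.toNat with hk
  have hkN : k < N := by omega
  have hkc : ((k:ℕ):ℝ) = (c₁:ℝ) := by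
    have := Int.toNat_of_nonneg hc1a
    exact_mod_cast congrArg (fun z : ℤ => (z:ℝ)) this
  have hzmem : (![(c₁:ℝ)/N, (c₂:ℝ)/N] : Fin 2 → ℝ) ∈ rank1LattPts g N := by
    refine ⟨k, hkN, ?_⟩
    have hfr1 : Int.fract ((k:ℝ)/N) = (c₁:ℝ)/N := by
      rw [fract_nat_div N k hN hkN, hkc]
    have hfr2 : Int.fract ((k:ℝ)*g/N) = (c₂:ℝ)/N := by
      have hcongR : (c₁:ℝ) * g - c₂ = (m:ℝ) * N := by exact_mod_cast congrArg (fun z : ℤ => (z:ℝ)) hcong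
      have heq : (k:ℝ)*g/N = (c₂:ℝ)/N + (m:ℝ) := by
        rw [hkc]; field_simp; linarith [hcongR]
      rw [heq, Int.fract_add_intCast]
      rw [Int.fract_eq_self]
      constructor
      · have : (0:ℝ) ≤ (c₂:ℝ) := by exact_mod_cast hc2a
        positivity
      · rw [div_lt_one hN0]
        have : (c₂:ℝ) ≤ (N:ℝ) - 1 := by exact_mod_cast hc2b
        linarith
    funext j
    fin_cases j
    · simp [hfr1]
    · simp [hfr2]
  refine ⟨![(c₁:ℝ)/N, (c₂:ℝ)/N], hzmem, ?_⟩
  rw [dist_pi_le_iff (by positivity)]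
  have hco1 : |u1 - (c₁:ℝ)/N| ≤ Hr := by
    have heq : u1 - (c₁:ℝ)/N = ((N:ℝ)*u1 - c₁)/N := by field_simp
    rw [heq, abs_div, abs_of_pos hN0, div_le_iff₀ hN0]
    linarith [hb1']
  have hco2 : |u2 - (c₂:ℝ)/N| ≤ Hr := by
    have heq : u2 - (c₂:ℝ)/N = ((N:ℝ)*u2 - c₂)/N := by field_simp
    rw [heq, abs_div, abs_of_pos hN0, div_le_iff₀ hN0]
    linarith [hb2']
  intro b
  fin_cases b
  · rw [Real.dist_eq]
    have hz0 : (![(c₁:ℝ)/N, (c₂:ℝ)/N] : Fin 2 → ℝ) 0 = (c₁:ℝ)/N := rfl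
    calc |x 0 - (![(c₁:ℝ)/N, (c₂:ℝ)/N] : Fin 2 → ℝ) 0|
        = |x 0 - (c₁:ℝ)/N| := by rw [hz0]
      _ ≤ |x 0 - u1| + |u1 - (c₁:ℝ)/N| := abs_sub_le _ _ _
      _ ≤ (Hr + ε) + Hr := by
          have h5 : |x 0 - u1| ≤ Hr + ε := by
            rw [hu1]
            have := abs_le.mp hclC0
            rw [abs_le]
            constructor <;> linarith [this.1, this.2]
          linarith [hco1]
      _ ≤ 2*Hr + ε := by linarith
  · rw [Real.dist_eq]
    have hz1 : (![(c₁:ℝ)/N, (c₂:ℝ)/N] : Fin 2 → ℝ) 1 = (c₂:ℝ)/N := rfl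
    calc |x 1 - (![(c₁:ℝ)/N, (c₂:ℝ)/N] : Fin 2 → ℝ) 1|
        = |x 1 - (c₂:ℝ)/N| := by rw [hz1]
      _ ≤ |x 1 - u2| + |u2 - (c₂:ℝ)/N| := abs_sub_le _ _ _
      _ ≤ (Hr + ε) + Hr := by
          have h5 : |x 1 - u2| ≤ Hr + ε := by
            rw [hu2]
            have := abs_le.mp hclC1
            rw [abs_le]
            constructor <;> linarith [this.1, this.2]
          linarith [hco2]
      _ ≤ 2*Hr + ε := by linarith

end MeshAux
end

open MeshAux

/-- Let `g, N ∈ ℕ` with `gcd(g, N) = 1`, `g/N = [a₀; a₁, …, a_ℓ]` with `a_ℓ = 1` and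
`K = max(a₁, …, a_ℓ)`. Then the mesh ratio of the rank-1 lattice point set
`P((1,g), N)` satisfies `ρ_∞(P) ≤ 4(K+2)`. -/
theorem meshRatio_rank1LattPts_le
    (g N : ℕ) (hN : 0 < N) (hgcd : Nat.Coprime g N)
    (a₀ : ℕ) (as : List ℕ) (has : as ≠ [])
    (hpos : ∀ a ∈ as, 1 ≤ a) (hlast : as.getLast? = some 1)
    (hcf : (g : ℝ) / N = cfVal (a₀ :: as))
    (K : ℕ) (hK : K = as.foldr max 0) :
    covRadInf (rank1LattPts g N) (Set.Icc (0 : Fin 2 → ℝ) 1) / sepRadInf (rank1LattPts g N)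
      ≤ 4 * ((K : ℝ) + 2) := by
  by_cases hN1 : N = 1
  · subst hN1
    have hempty : {r : ℝ | ∃ x ∈ rank1LattPts g 1, ∃ y ∈ rank1LattPts g 1,
        x ≠ y ∧ r = dist x y} = ∅ := by
      apply Set.eq_empty_iff_forall_notMem.mpr
      rintro r ⟨x, ⟨k, hk, rfl⟩, y, ⟨k', hk', rfl⟩, hxy, -⟩
      apply hxy
      have hk0 : k = 0 := by omega
      have hk0' : k' = 0 := by omega
      rw [hk0, hk0']
    have hsep0 : sepRadInf (rank1LattPts g 1) = 0 := by
      unfold sepRadInf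
      rw [hempty, Real.sInf_empty]
      norm_num
    rw [hsep0, div_zero]
    positivity
  · have hN2 : 2 ≤ N := by omega
    have hN0 : (0:ℝ) < N := by exact_mod_cast hN
    have hL1 : 1 ≤ as.length := List.length_pos_iff.mpr has
    obtain ⟨i₀, hi₀mem, hi₀min⟩ := Finset.exists_min_image (Finset.Icc 1 as.length)
      (fun i => max (qs as i) |es g N a₀ as i|) ⟨1, Finset.mem_Icc.mpr ⟨le_refl 1, hL1⟩⟩
    obtain ⟨hi₀1, hi₀L⟩ := Finset.mem_Icc.mp hi₀mem
    set μZ : ℤ := max (qs as i₀) |es g N a₀ as i₀| with hμZ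
    set μr : ℝ := (μZ:ℝ)/N with hμrdef
    set Hr : ℝ := ((max (qs as (i₀+1)) |es g N a₀ as i₀| : ℤ):ℝ)/N with hHrdef
    have hμZ1 : 1 ≤ μZ := le_trans (one_le_qs as hpos i₀ hi₀1) (le_max_left _ _)
    have hμZ1r : (1:ℝ) ≤ (μZ:ℝ) := by exact_mod_cast hμZ1
    have hμr_pos : 0 < μr := by rw [hμrdef]; exact div_pos (by linarith) hN0
    have hμrN : 1/(N:ℝ) ≤ μr := by
      rw [hμrdef]
      exact (div_le_div_iff_of_pos_right hN0).mpr hμZ1r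
    have hnum1 : (1:ℤ) ≤ max (qs as (i₀+1)) |es g N a₀ as i₀| :=
      le_trans (one_le_qs as hpos (i₀+1) (by omega)) (le_max_left _ _)
    have hnum1r : (1:ℝ) ≤ ((max (qs as (i₀+1)) |es g N a₀ as i₀| : ℤ):ℝ) := by
      exact_mod_cast hnum1
    have hHr0 : 0 ≤ Hr := by
      rw [hHrdef]; exact div_nonneg (by linarith) hN0.le
    have hq'K : qs as (i₀+1) ≤ ((K:ℤ)+1) * qs as i₀ := by
      obtain ⟨j, rfl⟩ : ∃ j, i₀ = j + 1 := ⟨i₀ - 1, by omega⟩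
      have hjL : j < as.length := by omega
      have hAe : A as j = as[j] := by unfold A; rw [as.getD_eq_getElem 1 hjL]
      have hAK : (A as j : ℤ) ≤ (K:ℤ) := by
        rw [hAe]
        have h := le_foldr_max as as[j] (as.getElem_mem hjL)
        rw [hK]
        exact_mod_cast h
      have h1 := qs_le_succ as hpos j
      have h2 := qs_nonneg as j
      have h3 := qs_nonneg as (j+1)
      have hrecq : qs as (j+2) = A as j * qs as (j+1) + qs as j := by rw [qs]
      have hKnn : (0:ℤ) ≤ (K:ℤ) := Int.ofNat_nonneg K
      rw [hrecq]
      nlinarith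
    have hZK : (max (qs as (i₀+1)) |es g N a₀ as i₀| : ℤ) ≤ ((K:ℤ)+1) * μZ := by
      have hKnn : (0:ℤ) ≤ (K:ℤ) := Int.ofNat_nonneg K
      apply max_le
      · calc qs as (i₀+1) ≤ ((K:ℤ)+1) * qs as i₀ := hq'K
          _ ≤ ((K:ℤ)+1) * μZ := by
              have h := le_max_left (qs as i₀) |es g N a₀ as i₀|
              rw [hμZ]; nlinarith
      · calc |es g N a₀ as i₀| ≤ μZ := by rw [hμZ]; exact le_max_right _ _
          _ ≤ ((K:ℤ)+1) * μZ := by nlinarith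
    have hHrK : Hr ≤ ((K:ℝ)+1) * μr := by
      have hcast : ((max (qs as (i₀+1)) |es g N a₀ as i₀| : ℤ):ℝ) ≤ ((K:ℝ)+1) * (μZ:ℝ) := by
        exact_mod_cast hZK
      rw [hHrdef, hμrdef, div_le_iff₀ hN0]
      have heq : ((K:ℝ)+1)*((μZ:ℝ)/N)*N = ((K:ℝ)+1)*(μZ:ℝ) := by field_simp
      rw [heq]
      exact hcast
    have hμmin' : ∀ i ∈ Finset.Icc 1 as.length, μZ ≤ max (qs as i) |es g N a₀ as i| := by
      intro i hi; rw [hμZ]; exact hi₀min i hi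
    have hsInfS : μr ≤ sInf {r : ℝ | ∃ x ∈ rank1LattPts g N, ∃ y ∈ rank1LattPts g N,
        x ≠ y ∧ r = dist x y} := by
      apply le_csInf
      · refine ⟨dist (![Int.fract (((0:ℕ):ℝ) / N), Int.fract (((0:ℕ):ℝ) * g / N)])
            (![Int.fract (((1:ℕ):ℝ) / N), Int.fract (((1:ℕ):ℝ) * g / N)]),
          _, ⟨0, by omega, rfl⟩, _, ⟨1, by omega, rfl⟩, ?_, rfl⟩
        intro heq
        have h0 := congrFun heq 0
        simp only [Matrix.cons_val_zero] at h0
        rw [fract_nat_div N 0 hN (by omega), fract_nat_div N 1 hN (by omega)] at h0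
        rw [Nat.cast_zero, Nat.cast_one, zero_div] at h0
        exact (one_div_ne_zero (ne_of_gt hN0)) h0.symm
      · rintro r ⟨xx, ⟨k, hk, rfl⟩, yy, ⟨k', hk', rfl⟩, hne, rfl⟩
        have hkk : k ≠ k' := by rintro rfl; exact hne rfl
        have hsl := sep_lower g N a₀ as hN hgcd hpos has hlast hcf μZ hμmin' k k' hk hk' hkk
        rw [hμrdef, div_le_iff₀ hN0]
        linarith [hsl]
    have hsep : μr/2 ≤ sepRadInf (rank1LattPts g N) := by
      unfold sepRadInf
      linarith [hsInfS]
    have hseppos : 0 < sepRadInf (rank1LattPts g N) := lt_of_lt_of_le (by positivity) hsep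
    have hcovle : covRadInf (rank1LattPts g N) (Set.Icc 0 1) ≤ (2*(K:ℝ)+4) * μr := by
      have hKnnr : (0:ℝ) ≤ (K:ℝ) := Nat.cast_nonneg K
      by_cases hH2 : Hr ≤ 1/2
      · have h1 : covRadInf (rank1LattPts g N) (Set.Icc 0 1) ≤ 2*Hr + 1/(2*(N:ℝ)) := by
          apply covRad_le
          · positivity
          · intro x hx
            exact cov_point g N a₀ as hN hpos has hlast hcf i₀ hi₀1 hi₀L Hr hHrdef hH2 x hx
        have hεμ : 1/(2*(N:ℝ)) ≤ μr/2 := by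
          have heq2 : 1/(2*(N:ℝ)) = (1/(N:ℝ))/2 := by ring
          rw [heq2]; linarith [hμrN]
        linarith [h1, hHrK, hμr_pos]
      · push_neg at hH2
        have h1 : covRadInf (rank1LattPts g N) (Set.Icc 0 1) ≤ 1 := by
          apply covRad_le _ _ zero_le_one
          intro x hx
          refine ⟨![Int.fract (((0:ℕ):ℝ)/N), Int.fract (((0:ℕ):ℝ)*g/N)], ⟨0, hN, rfl⟩, ?_⟩
          rw [dist_pi_le_iff zero_le_one]
          intro b
          have hz : (![Int.fract (((0:ℕ):ℝ)/N), Int.fract (((0:ℕ):ℝ)*g/N)] : Fin 2 → ℝ) b = 0 := by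
            fin_cases b <;> simp
          rw [Real.dist_eq, hz, sub_zero, abs_le]
          have ha : (0:ℝ) ≤ x b := by have := hx.1 b; simpa using this
          have hb2 : x b ≤ 1 := by have := hx.2 b; simpa using this
          exact ⟨by linarith, hb2⟩
        linarith [h1, hHrK, hμr_pos]
    rw [div_le_iff₀ hseppos]
    have h2s : μr ≤ 2 * sepRadInf (rank1LattPts g N) := by linarith [hsep]
    nlinarith [hcovle, h2s, hμr_pos, hseppos, Nat.cast_nonneg (α := ℝ) K,
      mul_nonneg (by linarith [Nat.cast_nonneg (α := ℝ) K] : (0:ℝ) ≤ 2*(K:ℝ)+4)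
        (by linarith [h2s] : (0:ℝ) ≤ 2 * sepRadInf (rank1LattPts g N) - μr)]
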